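/- Existence criterion for nondegenerate Euclidean tetrahedra. Let l_{ab} ≥ 0 for 1 ≤ a < b ≤ 4. There exist affinely independent points v₁,…,v₄ ∈ ℝ³ with dist(v_a,v_b) = l_{ab} for all a < b if and only if: (i) each of the four faces (a,b,c) satisfies the triangle inequalities among l_{ab}, l_{ac}, l_{bc}, and (ii) −det M > 0, where M is the 5×5 bordered Cayley–Menger matrix of the six lengths l_{ab}. -/

import Mathlib

/-!
Polarization turns the squared edge lengths into the Gram matrix `G` of the edge vectors
`v₂ - v₁, v₃ - v₁, v₄ - v₁`, and `-det M = det G`. Affinely independent points have linearly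
independent edge vectors, so `G` is positive definite and `det G > 0`. Conversely, the triangle
inequalities on the two faces through `v₁v₂` make the corresponding `2 × 2` principal minors of
`G` nonnegative (Heron), which together with `det G > 0` forces `G` to be positive definite
(Sylvester's criterion). A positive definite matrix is the Gram matrix of linearly independent
vectors of `ℝ³` (take a square root), and these vectors, together with the origin, realise the
tetrahedron.
-/

open Real

/-- The bordered Cayley–Menger matrix of a family of "distances" `d i j` on `m` points:
the `(m+1) × (m+1)` matrix with rows and columns indexed by `{∗} ∪ {0,…,m−1}`,
with `M_{∗∗} = 0`, `M_{∗i} = M_{i∗} = 1`, `M_{ii} = 0` and `M_{ij} = −½ d(i,j)²`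
for `i ≠ j`. -/
noncomputable def cayleyMenger {m : ℕ} (d : Fin m → Fin m → ℝ) :
    Matrix (Option (Fin m)) (Option (Fin m)) ℝ :=
  Matrix.of fun i j =>
    match i, j with
    | none, none => 0
    | none, some _ => 1
    | some _, none => 1
    | some a, some b => if a = b then 0 else -(1/2) * d a b ^ 2

open Matrix

noncomputable def gramOfDist {m : ℕ} (d : Fin (m + 1) → Fin (m + 1) → ℝ) :
    Matrix (Fin m) (Fin m) ℝ :=
  of fun i j => (d 0 i.succ ^ 2 + d 0 j.succ ^ 2 - d i.succ j.succ ^ 2) / 2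

section GramOfDist

variable {m : ℕ} {d : Fin (m + 1) → Fin (m + 1) → ℝ}

theorem gramOfDist_apply_self (hd_self : ∀ i, d i i = 0) (i : Fin m) :
    gramOfDist d i i = d 0 i.succ ^ 2 := by
  simp only [gramOfDist, of_apply, hd_self]
  ring

theorem isHermitian_gramOfDist (hd_comm : ∀ i j, d i j = d j i) : (gramOfDist d).IsHermitian := by
  ext i j
  simp only [conjTranspose_apply, gramOfDist, of_apply, star_trivial, hd_comm j.succ i.succ]
  ring

theorem gramOfDist_minor_nonneg_of_triangle (hd_self : ∀ i, d i i = 0) (i j : Fin m)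
    (ha : d 0 i.succ ≤ d 0 j.succ + d i.succ j.succ)
    (hb : d 0 j.succ ≤ d 0 i.succ + d i.succ j.succ)
    (hc : d i.succ j.succ ≤ d 0 i.succ + d 0 j.succ) :
    0 ≤ gramOfDist d i i * gramOfDist d j j - gramOfDist d i j ^ 2 := by
  rw [gramOfDist_apply_self hd_self, gramOfDist_apply_self hd_self]
  set a := d 0 i.succ
  set b := d 0 j.succ
  set c := d i.succ j.succ
  -- Heron's formula: this minor is `4 · area²` of the triangle with sides `a, b, c`
  have heron : a ^ 2 * b ^ 2 - gramOfDist d i j ^ 2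
      = (a + b + c) * (b + c - a) * (a + c - b) * (a + b - c) / 4 := by
    simp only [gramOfDist, of_apply, a, b, c]
    ring
  have : 0 ≤ a + b + c := by linarith
  have := sub_nonneg.2 ha
  have := sub_nonneg.2 hb
  have := sub_nonneg.2 hc
  rw [heron]
  positivity

end GramOfDist

theorem dist_triangle_inequalities {α : Type*} [PseudoMetricSpace α] (x y z : α) :
    dist x y ≤ dist x z + dist y z ∧ dist x z ≤ dist x y + dist y z ∧
      dist y z ≤ dist x y + dist x z :=
  ⟨dist_triangle_right x y z, dist_triangle x y z, dist_triangle_left y z x⟩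

theorem affineIndependent_iff_linearIndependent_vsub_succ {k V P : Type*} [Ring k]
    [AddCommGroup V] [Module k V] [AddTorsor V P] {m : ℕ} (v : Fin (m + 1) → P) :
    AffineIndependent k v ↔ LinearIndependent k fun i : Fin m => v i.succ -ᵥ v 0 := by
  rw [affineIndependent_iff_linearIndependent_vsub k v 0,
    ← linearIndependent_equiv (finSuccAboveEquiv 0)]
  rfl

section InnerProductSpace

variable {E : Type*} [NormedAddCommGroup E] [InnerProductSpace ℝ E] {m : ℕ}

theorem gram_sub_eq_gramOfDist (v : Fin (m + 1) → E) :
    gram ℝ (fun i => v i.succ - v 0) = gramOfDist fun i j => dist (v i) (v j) := by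
  ext i j
  have h := norm_sub_sq_real (v i.succ - v 0) (v j.succ - v 0)
  rw [sub_sub_sub_cancel_right] at h
  simp only [gram_apply, gramOfDist, of_apply, dist_eq_norm, norm_sub_rev (v 0)]
  linarith

theorem posDef_gramOfDist_of_affineIndependent {v : Fin (m + 1) → E}
    (hv : AffineIndependent ℝ v) : (gramOfDist fun i j => dist (v i) (v j)).PosDef := by
  rw [← gram_sub_eq_gramOfDist]
  exact posDef_gram_of_linearIndependent
    ((affineIndependent_iff_linearIndependent_vsub_succ v).1 hv)

end InnerProductSpace

theorem dist_eq_of_gramOfDist_eq {P : Type*} [PseudoMetricSpace P] {m : ℕ}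
    {v : Fin (m + 1) → P} {d : Fin (m + 1) → Fin (m + 1) → ℝ}
    (hd_self : ∀ i, d i i = 0) (hd_comm : ∀ i j, d i j = d j i) (hd_nonneg : ∀ i j, 0 ≤ d i j)
    (h : gramOfDist (fun i j => dist (v i) (v j)) = gramOfDist d) (i j : Fin (m + 1)) :
    dist (v i) (v j) = d i j := by
  have h₀ : ∀ i : Fin m, dist (v 0) (v i.succ) = d 0 i.succ := fun i => by
    have := congrFun (congrFun h i) i
    rw [gramOfDist_apply_self (fun i => dist_self (v i)), gramOfDist_apply_self hd_self] at this
    exact (sq_eq_sq₀ dist_nonneg (hd_nonneg _ _)).1 this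
  have h₁ : ∀ i j : Fin m, dist (v i.succ) (v j.succ) = d i.succ j.succ := fun i j => by
    have := congrFun (congrFun h i) j
    simp only [gramOfDist, of_apply, h₀] at this
    exact (sq_eq_sq₀ dist_nonneg (hd_nonneg _ _)).1 (by linarith)
  cases i using Fin.cases <;> cases j using Fin.cases
  · rw [dist_self, hd_self]
  · exact h₀ _
  · rw [dist_comm, hd_comm]
    exact h₀ _
  · exact h₁ _ _

theorem exists_gram_eq_of_posSemidef {n : Type*} [Fintype n] {G : Matrix n n ℝ}
    (hG : G.PosSemidef) : ∃ u : n → EuclideanSpace ℝ n, gram ℝ u = G := by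
  classical
  open scoped MatrixOrder in
  obtain ⟨B, rfl⟩ := CStarAlgebra.nonneg_iff_eq_star_mul_self.mp hG.nonneg
  refine ⟨fun i => WithLp.toLp 2 fun k => B k i, ?_⟩
  ext i j
  simp [mul_apply, PiLp.inner_apply, mul_comm]

theorem exists_affineIndependent_dist_eq {m : ℕ} {d : Fin (m + 1) → Fin (m + 1) → ℝ}
    (hd_self : ∀ i, d i i = 0) (hd_comm : ∀ i j, d i j = d j i) (hd_nonneg : ∀ i j, 0 ≤ d i j)
    (hG : (gramOfDist d).PosDef) :
    ∃ v : Fin (m + 1) → EuclideanSpace ℝ (Fin m),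
      AffineIndependent ℝ v ∧ ∀ i j, dist (v i) (v j) = d i j := by
  obtain ⟨u, hu⟩ := exists_gram_eq_of_posSemidef hG.posSemidef
  let v : Fin (m + 1) → EuclideanSpace ℝ (Fin m) := Fin.cons 0 u
  have hv : (fun i => v i.succ - v 0) = u := by
    funext i
    simp [v]
  refine ⟨v, ?_, dist_eq_of_gramOfDist_eq hd_self hd_comm hd_nonneg ?_⟩
  · rw [affineIndependent_iff_linearIndependent_vsub_succ]
    simp_rw [vsub_eq_sub]
    rw [hv]
    exact linearIndependent_of_posDef_gram (hu ▸ hG)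
  · rw [← gram_sub_eq_gramOfDist, hv, hu]

section FinThree

variable {G : Matrix (Fin 3) (Fin 3) ℝ}

theorem posDef_of_fin_three_of_leading_minors_pos (hG : G.IsHermitian) (h₁ : 0 < G 0 0)
    (h₂ : 0 < G 0 0 * G 1 1 - G 0 1 ^ 2) (h₃ : 0 < G.det) : G.PosDef := by
  refine posDef_iff_dotProduct_mulVec.2 ⟨hG, fun x hx => ?_⟩
  have hsymm : ∀ i j, G j i = G i j := fun i j => by simpa using hG.apply i j
  set a := G 0 0
  set m := G 0 0 * G 1 1 - G 0 1 ^ 2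
  -- completing the squares, i.e. the `LDLᵀ` factorisation of `G`
  have hQ : a * m * (star x ⬝ᵥ G *ᵥ x) = m * (a * x 0 + G 0 1 * x 1 + G 0 2 * x 2) ^ 2
      + (m * x 1 + (a * G 1 2 - G 0 1 * G 0 2) * x 2) ^ 2 + a * G.det * x 2 ^ 2 := by
    simp only [dotProduct, mulVec, Fin.sum_univ_three, det_fin_three, star_trivial, hsymm 0 1,
      hsymm 0 2, hsymm 1 2, a, m]
    ring
  have hpos : 0 < m * (a * x 0 + G 0 1 * x 1 + G 0 2 * x 2) ^ 2
      + (m * x 1 + (a * G 1 2 - G 0 1 * G 0 2) * x 2) ^ 2 + a * G.det * x 2 ^ 2 := by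
    by_cases hx₂ : x 2 = 0
    · by_cases hx₁ : x 1 = 0
      · have hx₀ : x 0 ≠ 0 := fun hx₀ => hx (by ext i; fin_cases i <;> assumption)
        simp only [hx₁, hx₂, mul_zero, add_zero, zero_pow two_ne_zero]
        exact mul_pos h₂ (pow_two_pos_of_ne_zero (mul_ne_zero h₁.ne' hx₀))
      · simp only [hx₂, mul_zero, add_zero, zero_pow two_ne_zero]
        have := pow_two_pos_of_ne_zero (mul_ne_zero h₂.ne' hx₁)
        positivity
    · have := mul_pos (mul_pos h₁ h₃) (pow_two_pos_of_ne_zero hx₂)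
      positivity
  exact pos_of_mul_pos_right (hQ ▸ hpos) (mul_pos h₁ h₂).le

theorem posDef_of_fin_three_of_minors_nonneg (hG : G.IsHermitian) (h₀ : 0 ≤ G 0 0)
    (h₁ : 0 ≤ G 0 0 * G 1 1 - G 0 1 ^ 2) (h₂ : 0 ≤ G 0 0 * G 2 2 - G 0 2 ^ 2)
    (h₃ : 0 < G.det) : G.PosDef := by
  have hsymm : ∀ i j, G j i = G i j := fun i j => by simpa using hG.apply i j
  -- Sylvester's determinant identity for the minors bordering `G 0 0`
  have hdet : G 0 0 * G.det = (G 0 0 * G 1 1 - G 0 1 ^ 2) * (G 0 0 * G 2 2 - G 0 2 ^ 2)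
      - (G 0 0 * G 1 2 - G 0 1 * G 0 2) ^ 2 := by
    rw [det_fin_three, hsymm 0 1, hsymm 0 2, hsymm 1 2]
    ring
  have ha : 0 < G 0 0 := by
    refine h₀.lt_of_ne fun ha => h₃.ne' ?_
    rw [← ha, zero_mul, zero_sub, neg_nonneg] at h₁ h₂
    have hb : G 0 1 = 0 := pow_eq_zero_iff two_ne_zero |>.1 (h₁.antisymm (sq_nonneg _))
    have hc : G 0 2 = 0 := pow_eq_zero_iff two_ne_zero |>.1 (h₂.antisymm (sq_nonneg _))
    rw [det_fin_three, hsymm 0 1, hsymm 0 2, ← ha, hb, hc]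
    ring
  have hm : 0 < (G 0 0 * G 1 1 - G 0 1 ^ 2) * (G 0 0 * G 2 2 - G 0 2 ^ 2) := by
    nlinarith [mul_pos ha h₃, sq_nonneg (G 0 0 * G 1 2 - G 0 1 * G 0 2)]
  refine posDef_of_fin_three_of_leading_minors_pos hG ha (h₁.lt_of_ne fun h => ?_) h₃
  rw [← h, zero_mul] at hm
  exact hm.false

end FinThree

theorem neg_det_cayleyMenger_eq_det_gramOfDist (l12 l13 l14 l23 l24 l34 : ℝ) :
    -(cayleyMenger (fun i j =>
        (!![0, l12, l13, l14;
            l12, 0, l23, l24;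
            l13, l23, 0, l34;
            l14, l24, l34, 0] : Matrix (Fin 4) (Fin 4) ℝ) i j)).det =
    (gramOfDist fun i j =>
        (!![0, l12, l13, l14;
            l12, 0, l23, l24;
            l13, l23, 0, l34;
            l14, l24, l34, 0] : Matrix (Fin 4) (Fin 4) ℝ) i j).det := by
  rw [← det_submatrix_equiv_self (finSuccEquiv 4)]
  have h : (cayleyMenger (fun i j =>
        (!![0, l12, l13, l14;
            l12, 0, l23, l24;
            l13, l23, 0, l34;
            l14, l24, l34, 0] : Matrix (Fin 4) (Fin 4) ℝ) i j)).submatrix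
          (finSuccEquiv 4) (finSuccEquiv 4) =
      !![0, 1, 1, 1, 1;
         1, 0, -(1/2) * l12 ^ 2, -(1/2) * l13 ^ 2, -(1/2) * l14 ^ 2;
         1, -(1/2) * l12 ^ 2, 0, -(1/2) * l23 ^ 2, -(1/2) * l24 ^ 2;
         1, -(1/2) * l13 ^ 2, -(1/2) * l23 ^ 2, 0, -(1/2) * l34 ^ 2;
         1, -(1/2) * l14 ^ 2, -(1/2) * l24 ^ 2, -(1/2) * l34 ^ 2, 0] := by
    ext i j
    fin_cases i <;> fin_cases j <;> rfl
  rw [h, det_fin_three]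
  simp [det_succ_row_zero, Fin.sum_univ_succ, Fin.succAbove, gramOfDist]
  ring

/-- **Existence criterion for nondegenerate Euclidean tetrahedra.** For `l_{ab} ≥ 0`,
there exist affinely independent points `v₁, …, v₄ ∈ ℝ³` with `dist(v_a, v_b) = l_{ab}`
if and only if each of the four faces satisfies the triangle inequalities and
`−det M > 0`, where `M` is the `5 × 5` bordered Cayley–Menger matrix of the six
lengths. -/
theorem euclidean_tetrahedron_exists_iff (l12 l13 l14 l23 l24 l34 : ℝ)
    (h12 : 0 ≤ l12) (h13 : 0 ≤ l13) (h14 : 0 ≤ l14)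
    (h23 : 0 ≤ l23) (h24 : 0 ≤ l24) (h34 : 0 ≤ l34) :
    (∃ v : Fin 4 → EuclideanSpace ℝ (Fin 3),
      AffineIndependent ℝ v ∧
      dist (v 0) (v 1) = l12 ∧ dist (v 0) (v 2) = l13 ∧ dist (v 0) (v 3) = l14 ∧
      dist (v 1) (v 2) = l23 ∧ dist (v 1) (v 3) = l24 ∧ dist (v 2) (v 3) = l34) ↔
    ((l12 ≤ l13 + l23 ∧ l13 ≤ l12 + l23 ∧ l23 ≤ l12 + l13) ∧
     (l12 ≤ l14 + l24 ∧ l14 ≤ l12 + l24 ∧ l24 ≤ l12 + l14) ∧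
     (l13 ≤ l14 + l34 ∧ l14 ≤ l13 + l34 ∧ l34 ≤ l13 + l14) ∧
     (l23 ≤ l24 + l34 ∧ l24 ≤ l23 + l34 ∧ l34 ≤ l23 + l24) ∧
     0 < -(cayleyMenger (fun i j =>
        (!![0, l12, l13, l14;
            l12, 0, l23, l24;
            l13, l23, 0, l34;
            l14, l24, l34, 0] : Matrix (Fin 4) (Fin 4) ℝ) i j)).det) := by
  rw [neg_det_cayleyMenger_eq_det_gramOfDist]
  set d : Fin 4 → Fin 4 → ℝ := fun i j => (!![0, l12, l13, l14; l12, 0, l23, l24;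
    l13, l23, 0, l34; l14, l24, l34, 0] : Matrix (Fin 4) (Fin 4) ℝ) i j
  constructor
  · rintro ⟨v, hv, rfl, rfl, rfl, rfl, rfl, rfl⟩
    have hd : d = fun i j => dist (v i) (v j) := by
      ext i j
      fin_cases i <;> fin_cases j <;> simp [d] <;> exact dist_comm _ _
    refine ⟨dist_triangle_inequalities _ _ _, dist_triangle_inequalities _ _ _,
      dist_triangle_inequalities _ _ _, dist_triangle_inequalities _ _ _, ?_⟩
    rw [hd]
    exact (posDef_gramOfDist_of_affineIndependent hv).det_pos
  · rintro ⟨⟨t₁, t₂, t₃⟩, ⟨t₄, t₅, t₆⟩, -, -, hdet⟩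
    have hd_self : ∀ i, d i i = 0 := fun i => by fin_cases i <;> rfl
    have hd_comm : ∀ i j, d i j = d j i := fun i j => by fin_cases i <;> fin_cases j <;> rfl
    have hd_nonneg : ∀ i j, 0 ≤ d i j := fun i j => by
      fin_cases i <;> fin_cases j <;> simp [d, *]
    have hG : (gramOfDist d).PosDef :=
      posDef_of_fin_three_of_minors_nonneg (isHermitian_gramOfDist hd_comm)
        (gramOfDist_apply_self hd_self 0 ▸ sq_nonneg _)
        (gramOfDist_minor_nonneg_of_triangle hd_self 0 1 t₁ t₂ t₃)
        (gramOfDist_minor_nonneg_of_triangle hd_self 0 2 t₄ t₅ t₆) hdet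
    obtain ⟨v, hv, hdist⟩ := exists_affineIndependent_dist_eq hd_self hd_comm hd_nonneg hG
    exact ⟨v, hv, hdist 0 1, hdist 0 2, hdist 0 3, hdist 1 2, hdist 1 3, hdist 2 3⟩
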